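/- arXiv:1302.1137 — 8 statements merged into one kernel-verified Lean document; each statement's English description precedes it below -/
import Mathlib

section
/- Shift equivalence is an equivalence relation on endomorphisms in any category: it is reflexive and symmetric, and if g : Y → Y is shift equivalent to g' : Y' → Y' and g' is shift equivalent to g'' : Y'' → Y'', then g is shift equivalent to g''. -/
open CategoryTheory

/-- Iterated composition (`m`-th power) of an endomorphism in a category. -/
def catPow {C : Type*} [Category C] {Y : C} (g : Y ⟶ Y) : ℕ → (Y ⟶ Y)
  | 0 => 𝟙 Y
  | m + 1 => catPow g m ≫ g

/-- Endomorphisms `g : Y ⟶ Y` and `g' : Y' ⟶ Y'` in a category are *shift equivalent* if there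
exist morphisms `a : Y ⟶ Y'` and `b : Y' ⟶ Y` and an integer `m ≥ 0` such that `a ∘ g = g' ∘ a`,
`b ∘ g' = g ∘ b`, `b ∘ a = g ^ m` and `a ∘ b = g' ^ m`. -/
def IsShiftEquivalent {C : Type*} [Category C] {Y Y' : C} (g : Y ⟶ Y) (g' : Y' ⟶ Y') : Prop :=
  ∃ (a : Y ⟶ Y') (b : Y' ⟶ Y) (m : ℕ),
    g ≫ a = a ≫ g' ∧ g' ≫ b = b ≫ g ∧ a ≫ b = catPow g m ∧ b ≫ a = catPow g' m

section

variable {C : Type*} [Category C] {Y Y' Y'' : C}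

theorem catPow_add (g : Y ⟶ Y) (m n : ℕ) :
    catPow g m ≫ catPow g n = catPow g (m + n) := by
  induction n with
  | zero => simp [catPow]
  | succ n ih => rw [catPow, ← Category.assoc, ih]; rfl

theorem catPow_comp_eq_comp_catPow {g : Y ⟶ Y} {g' : Y' ⟶ Y'} {a : Y ⟶ Y'}
    (h : g ≫ a = a ≫ g') (n : ℕ) : catPow g n ≫ a = a ≫ catPow g' n := by
  induction n with
  | zero => simp [catPow]
  | succ n ih => rw [catPow, catPow, Category.assoc, h, ← Category.assoc, ih, Category.assoc]

namespace IsShiftEquivalent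

theorem refl (g : Y ⟶ Y) : IsShiftEquivalent g g :=
  ⟨𝟙 Y, 𝟙 Y, 0, by simp [catPow]⟩

theorem symm {g : Y ⟶ Y} {g' : Y' ⟶ Y'} (h : IsShiftEquivalent g g') :
    IsShiftEquivalent g' g :=
  let ⟨a, b, m, ha, hb, hab, hba⟩ := h
  ⟨b, a, m, hb, ha, hba, hab⟩

theorem trans {g : Y ⟶ Y} {g' : Y' ⟶ Y'} {g'' : Y'' ⟶ Y''}
    (h : IsShiftEquivalent g g') (h' : IsShiftEquivalent g' g'') :
    IsShiftEquivalent g g'' := by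
  obtain ⟨a, b, m, ha, hb, hab, hba⟩ := h
  obtain ⟨a', b', n, ha', hb', hab', hba'⟩ := h'
  refine ⟨a ≫ a', b' ≫ b, m + n, ?_, ?_, ?_, ?_⟩
  · rw [← Category.assoc, ha, Category.assoc, ha', Category.assoc]
  · rw [← Category.assoc, hb', Category.assoc, hb, Category.assoc]
  · calc (a ≫ a') ≫ b' ≫ b = a ≫ catPow g' n ≫ b := by
          rw [Category.assoc, ← Category.assoc a', hab']
      _ = (a ≫ b) ≫ catPow g n := by
          rw [catPow_comp_eq_comp_catPow hb, Category.assoc]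
      _ = catPow g (m + n) := by rw [hab, catPow_add]
  · calc (b' ≫ b) ≫ a ≫ a' = b' ≫ catPow g' m ≫ a' := by
          rw [Category.assoc, ← Category.assoc b, hba]
      _ = (b' ≫ a') ≫ catPow g'' m := by
          rw [catPow_comp_eq_comp_catPow ha', Category.assoc]
      _ = catPow g'' (m + n) := by rw [hba', catPow_add, Nat.add_comm]

end IsShiftEquivalent

end

/-- Shift equivalence is an equivalence relation on endomorphisms of a category: it is
reflexive, symmetric, and transitive. -/
theorem isShiftEquivalent_refl_symm_trans {C : Type*} [Category C] :
    (∀ {Y : C} (g : Y ⟶ Y), IsShiftEquivalent g g) ∧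
    (∀ {Y Y' : C} (g : Y ⟶ Y) (g' : Y' ⟶ Y'),
      IsShiftEquivalent g g' → IsShiftEquivalent g' g) ∧
    (∀ {Y Y' Y'' : C} (g : Y ⟶ Y) (g' : Y' ⟶ Y') (g'' : Y'' ⟶ Y''),
      IsShiftEquivalent g g' → IsShiftEquivalent g' g'' → IsShiftEquivalent g g'') :=
  ⟨IsShiftEquivalent.refl, fun _ _ => IsShiftEquivalent.symm,
    fun _ _ _ => IsShiftEquivalent.trans⟩
end

section
/- Let g : Y → Y and g' : Y' → Y' be endomorphisms in a category both of which are isomorphisms. Then g and g' are shift equivalent if and only if they are conjugate, i.e., there exists an isomorphism h : Y → Y' such that h∘g = g'∘h. -/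
open CategoryTheory

section

variable {C : Type*} [Category C]

instance catPow_isIso {Y : C} (g : Y ⟶ Y) [IsIso g] (m : ℕ) : IsIso (catPow g m) := by
  induction m with
  | zero => exact inferInstanceAs (IsIso (𝟙 Y))
  | succ n _ => exact inferInstanceAs (IsIso (catPow g n ≫ g))

theorem isIso_of_isIso_comp_of_isIso_comp {X Y : C} (f : X ⟶ Y) (g : Y ⟶ X)
    [IsIso (f ≫ g)] [IsIso (g ≫ f)] : IsIso f :=
  have : Mono f := mono_of_mono f g
  have : IsSplitEpi f := IsSplitEpi.mk' ⟨inv (g ≫ f) ≫ g, by simp⟩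
  isIso_of_mono_of_isSplitEpi f

theorem IsShiftEquivalent.of_iso {Y Y' : C} {g : Y ⟶ Y} {g' : Y' ⟶ Y'} (h : Y ≅ Y')
    (hh : g ≫ h.hom = h.hom ≫ g') : IsShiftEquivalent g g' :=
  ⟨h.hom, h.inv, 0, hh, by rw [Iso.eq_inv_comp, ← Category.assoc, ← hh]; simp,
    h.hom_inv_id, h.inv_hom_id⟩

theorem IsShiftEquivalent.exists_iso {Y Y' : C} {g : Y ⟶ Y} {g' : Y' ⟶ Y'} [IsIso g] [IsIso g']
    (hs : IsShiftEquivalent g g') : ∃ h : Y ≅ Y', g ≫ h.hom = h.hom ≫ g' := by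
  obtain ⟨a, b, m, hga, -, hab, hba⟩ := hs
  have : IsIso (a ≫ b) := hab ▸ inferInstance
  have : IsIso (b ≫ a) := hba ▸ inferInstance
  have : IsIso a := isIso_of_isIso_comp_of_isIso_comp a b
  exact ⟨asIso a, hga⟩

end

/-- Two endomorphisms that are isomorphisms are shift equivalent if and only if they are
conjugate, i.e. there is an isomorphism `h : Y ≅ Y'` with `h ∘ g = g' ∘ h`. -/
theorem isShiftEquivalent_iff_conjugate {C : Type*} [Category C] {Y Y' : C}
    (g : Y ⟶ Y) (g' : Y' ⟶ Y') [IsIso g] [IsIso g'] :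
    IsShiftEquivalent g g' ↔ ∃ h : Y ≅ Y', g ≫ h.hom = h.hom ≫ g' :=
  ⟨IsShiftEquivalent.exists_iso, fun ⟨h, hh⟩ => .of_iso h hh⟩
end

section
/- Two maps φ : J → J and φ' : J' → J' of finite sets J and J' are shift equivalent if and only if their induced permutations are conjugate, i.e., if and only if there exists a bijection h : gim(φ) → gim(φ') such that h(φ(x)) = φ'(h(x)) for every x ∈ gim(φ). -/
/-- Self-maps `φ : J → J` and `ψ : J' → J'` are *shift equivalent* if there exist maps
`a : J → J'` and `b : J' → J` and an integer `m ≥ 0` such that `a ∘ φ = ψ ∘ a`,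
`b ∘ ψ = φ ∘ b`, `b ∘ a = φ^[m]` and `a ∘ b = ψ^[m]`. -/
def FunShiftEquiv {J J' : Type*} (φ : J → J) (ψ : J' → J') : Prop :=
  ∃ (a : J → J') (b : J' → J) (m : ℕ),
    a ∘ φ = ψ ∘ a ∧ b ∘ ψ = φ ∘ b ∧ b ∘ a = φ^[m] ∧ a ∘ b = ψ^[m]

/-- The generalized image `gim(φ) = ⋂ₙ φⁿ(J)`, the largest subset of `J` invariant under `φ`. -/
def gimSet {J : Type*} (φ : J → J) : Set J :=
  ⋂ n : ℕ, Set.range φ^[n]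

theorem mapsTo_gimSet {J : Type*} (φ : J → J) : Set.MapsTo φ (gimSet φ) (gimSet φ) := by
  intro x hx
  simp only [gimSet, Set.mem_iInter] at hx ⊢
  intro n
  obtain ⟨y, hy⟩ := hx n
  exact ⟨φ y, by rw [← Function.iterate_succ_apply, Function.iterate_succ_apply', hy]⟩

/-- The *induced permutation* of `φ`: the restriction of `φ` to `gim(φ)`, regarded as a
self-map of `gim(φ)`. -/
def inducedPerm {J : Type*} (φ : J → J) : gimSet φ → gimSet φ :=
  Set.MapsTo.restrict φ _ _ (mapsTo_gimSet φ)

/-! Shift equivalence is an equivalence relation (transitivity adds the lags), conjugacy is shift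
equivalence with lag `0`, and for bijections it is no weaker than conjugacy, since `b ∘ a` and
`a ∘ b` being bijective forces `a` to be a bijection. On a finite set the images `φⁿ(J)` stabilise
at some `N`, so `gim(φ) = φᴺ(J)`; then `x ↦ φᴺ x` and the inclusion witness that `φ` is shift
equivalent to its induced permutation, with lag `N`. -/

open Function

namespace FunShiftEquiv

variable {α β γ : Type*} {f : α → α} {g : β → β} {k : γ → γ}

theorem symm (h : FunShiftEquiv f g) : FunShiftEquiv g f := by
  obtain ⟨a, b, m, ha, hb, hba, hab⟩ := h
  exact ⟨b, a, m, hb, ha, hab, hba⟩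

theorem trans (h₁ : FunShiftEquiv f g) (h₂ : FunShiftEquiv g k) : FunShiftEquiv f k := by
  obtain ⟨a₁, b₁, m₁, ha₁, hb₁, hba₁, hab₁⟩ := h₁
  obtain ⟨a₂, b₂, m₂, ha₂, hb₂, hba₂, hab₂⟩ := h₂
  have ha₁_iterate : Semiconj a₁ f^[m₂] g^[m₂] := (semiconj_iff_comp_eq.2 ha₁).iterate_right m₂
  have ha₂_iterate : Semiconj a₂ g^[m₁] k^[m₁] := (semiconj_iff_comp_eq.2 ha₂).iterate_right m₁
  refine ⟨a₂ ∘ a₁, b₁ ∘ b₂, m₁ + m₂, ?_, ?_, ?_, ?_⟩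
  · exact ((semiconj_iff_comp_eq.2 ha₁).trans (semiconj_iff_comp_eq.2 ha₂)).comp_eq
  · exact ((semiconj_iff_comp_eq.2 hb₂).trans (semiconj_iff_comp_eq.2 hb₁)).comp_eq
  · funext x
    calc b₁ (b₂ (a₂ (a₁ x))) = b₁ (g^[m₂] (a₁ x)) := congrArg b₁ (congrFun hba₂ _)
      _ = b₁ (a₁ (f^[m₂] x)) := by rw [ha₁_iterate]
      _ = f^[m₁ + m₂] x := by rw [iterate_add_apply, ← hba₁, comp_apply]
  · funext z
    calc a₂ (a₁ (b₁ (b₂ z))) = a₂ (g^[m₁] (b₂ z)) := congrArg a₂ (congrFun hab₁ _)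
      _ = k^[m₁] (a₂ (b₂ z)) := ha₂_iterate _
      _ = k^[m₁ + m₂] z := by rw [iterate_add_apply, ← hab₂, comp_apply]

theorem of_semiconj_equiv (e : α ≃ β) (he : Semiconj e f g) : FunShiftEquiv f g :=
  ⟨e, e.symm, 0, he.comp_eq, (he.inverse_left e.left_inv e.right_inv).comp_eq,
    e.symm_comp_self, e.self_comp_symm⟩

theorem exists_equiv_semiconj (h : FunShiftEquiv f g) (hf : Bijective f) (hg : Bijective g) :
    ∃ e : α ≃ β, Semiconj e f g := by
  obtain ⟨a, b, m, ha, -, hba, hab⟩ := h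
  have ha_inj : Injective a := .of_comp (f := b) (hba ▸ (hf.iterate m).injective)
  have ha_surj : Surjective a := .of_comp (hab ▸ (hg.iterate m).surjective)
  exact ⟨.ofBijective a ⟨ha_inj, ha_surj⟩, semiconj_iff_comp_eq.2 ha⟩

end FunShiftEquiv

section gimSet

variable {J : Type*} (φ : J → J)

theorem antitone_range_iterate : Antitone fun n => Set.range φ^[n] :=
  antitone_nat_of_succ_le fun n => by
    rw [iterate_succ]
    exact Set.range_comp_subset_range _ _

theorem exists_gimSet_eq_range_iterate [Finite J] : ∃ N, gimSet φ = Set.range φ^[N] := by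
  obtain ⟨N, hN⟩ := WellFoundedLT.antitone_chain_condition (antitone_range_iterate φ)
  refine ⟨N, (Set.iInter_subset _ N).antisymm fun x hx => Set.mem_iInter.2 fun n => ?_⟩
  rcases le_total n N with hn | hn
  · exact antitone_range_iterate φ hn hx
  · exact hN n hn ▸ hx

theorem bijective_inducedPerm [Finite J] : Bijective (inducedPerm φ) := by
  obtain ⟨N, hN⟩ := exists_gimSet_eq_range_iterate φ
  have hsurj : Surjective (inducedPerm φ) := by
    rintro ⟨y, hy⟩
    obtain ⟨z, rfl⟩ := Set.mem_iInter.1 hy (N + 1)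
    exact ⟨⟨φ^[N] z, hN ▸ Set.mem_range_self z⟩, Subtype.ext (iterate_succ_apply' φ N z).symm⟩
  exact ⟨Finite.injective_iff_surjective.2 hsurj, hsurj⟩

theorem funShiftEquiv_inducedPerm [Finite J] : FunShiftEquiv φ (inducedPerm φ) := by
  obtain ⟨N, hN⟩ := exists_gimSet_eq_range_iterate φ
  refine ⟨fun x => ⟨φ^[N] x, hN ▸ Set.mem_range_self x⟩, Subtype.val, N, ?_, rfl, rfl, ?_⟩
  · funext x
    exact Subtype.ext ((iterate_succ_apply φ N x).trans (iterate_succ_apply' φ N x))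
  · funext x
    exact Subtype.ext ((mapsTo_gimSet φ).coe_iterate_restrict x N).symm

end gimSet

/-- Two maps of finite sets are shift equivalent if and only if their induced permutations
are conjugate, i.e. iff there is a bijection `h : gim(φ) → gim(ψ)` with
`h(φ(x)) = ψ(h(x))` for every `x ∈ gim(φ)`. -/
theorem funShiftEquiv_iff_inducedPerm_conjugate {J J' : Type*} [Finite J] [Finite J']
    (φ : J → J) (ψ : J' → J') :
    FunShiftEquiv φ ψ ↔
      ∃ h : gimSet φ ≃ gimSet ψ,
        ∀ x : gimSet φ, h (inducedPerm φ x) = inducedPerm ψ (h x) := by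
  constructor
  · intro h
    exact ((funShiftEquiv_inducedPerm φ).symm.trans (h.trans (funShiftEquiv_inducedPerm ψ)))
      |>.exists_equiv_semiconj (bijective_inducedPerm φ) (bijective_inducedPerm ψ)
  · rintro ⟨e, he⟩
    exact (funShiftEquiv_inducedPerm φ).trans
      ((FunShiftEquiv.of_semiconj_equiv e he).trans (funShiftEquiv_inducedPerm ψ).symm)
end

section
/- If u : G → G and v : H → H are shift equivalent linear endomorphisms of finite-dimensional ℚ-vector spaces, then trace(u^n) = trace(v^n) for every integer n ≥ 1 (i.e., u and v are spectrum equivalent). -/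
/-- Linear endomorphisms `u : G → G` and `v : H → H` of `ℚ`-vector spaces are *shift
equivalent* if there exist linear maps `a : G → H` and `b : H → G` and an integer `m ≥ 0`
such that `a ∘ u = v ∘ a`, `b ∘ v = u ∘ b`, `b ∘ a = u ^ m` and `a ∘ b = v ^ m`. -/
def LinShiftEquiv {G H : Type*} [AddCommGroup G] [Module ℚ G] [AddCommGroup H] [Module ℚ H]
    (u : G →ₗ[ℚ] G) (v : H →ₗ[ℚ] H) : Prop :=
  ∃ (a : G →ₗ[ℚ] H) (b : H →ₗ[ℚ] G) (m : ℕ),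
    a ∘ₗ u = v ∘ₗ a ∧ b ∘ₗ v = u ∘ₗ b ∧ b ∘ₗ a = u ^ m ∧ a ∘ₗ b = v ^ m

/-!
By Fitting's lemma, `trace (f ^ n)` for `n ≥ 1` only sees the eventual range `⋂ₖ range (f ^ k)`,
on which `f` is invertible; its complement is the generalized `0`-eigenspace, where `f` is
nilpotent. The intertwiner `a` of a shift equivalence maps the eventual range of `u` to that of
`v`, and is bijective there because `b ∘ a = u ^ m` and `a ∘ b = v ^ m` are. So the restrictions
of `u` and `v` to their eventual ranges are conjugate, and have the same traces of powers.
-/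

open Module Function Set

namespace LinearMap

lemma trace_eq_of_comp_eq_comp_of_bijective {R M N : Type*} [CommRing R]
    [AddCommGroup M] [Module R M] [AddCommGroup N] [Module R N]
    {f : End R M} {g : End R N} {a : M →ₗ[R] N} (ha : Bijective a) (h : a ∘ₗ f = g ∘ₗ a) :
    trace R M f = trace R N g := by
  let e := LinearEquiv.ofBijective a ha
  have hg : g = e.conj f := by
    ext y
    obtain ⟨x, rfl⟩ := e.surjective y
    simpa [e, LinearEquiv.conj_apply] using (LinearMap.congr_fun h x).symm
  rw [hg, trace_conj']

section Field

variable {K V : Type*} [Field K] [AddCommGroup V] [Module K V] [FiniteDimensional K V]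

lemma trace_eq_trace_restrict_add_trace_restrict {p q : Submodule K V} (hpq : IsCompl p q)
    {f : End K V} (hp : MapsTo f p p) (hq : MapsTo f q q) :
    trace K V f = trace K p (f.restrict hp) + trace K q (f.restrict hq) := by
  let N : Bool → Submodule K V := fun b ↦ cond b p q
  have hN : DirectSum.IsInternal N :=
    (DirectSum.isInternal_submodule_iff_isCompl N (i := true) (j := false) (by simp)
      (by ext b; cases b <;> simp)).mpr hpq
  rw [trace_eq_sum_trace_restrict hN (f := f) (fun b ↦ by cases b <;> assumption),
    Fintype.sum_bool]
  rfl

end Field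

end LinearMap

namespace Module.End

section Semiring

variable {R M N : Type*} [Semiring R] [AddCommMonoid M] [Module R M] [AddCommMonoid N]
  [Module R N]

def eventualRange (f : End R M) : Submodule R M := ⨅ k, LinearMap.range (f ^ k)

lemma comp_pow_eq_pow_comp {f : End R M} {g : End R N} {a : M →ₗ[R] N}
    (h : a ∘ₗ f = g ∘ₗ a) (n : ℕ) : a ∘ₗ (f ^ n) = (g ^ n) ∘ₗ a := by
  have hsc : Semiconj a f g := fun x ↦ LinearMap.congr_fun h x
  ext x
  simpa [coe_pow] using hsc.iterate_right n x

lemma apply_mem_eventualRange {f : End R M} {g : End R N} {a : M →ₗ[R] N}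
    (h : a ∘ₗ f = g ∘ₗ a) : ∀ x ∈ eventualRange f, a x ∈ eventualRange g := by
  intro x hx
  simp only [eventualRange, Submodule.mem_iInf, LinearMap.mem_range] at hx ⊢
  intro k
  obtain ⟨y, rfl⟩ := hx k
  exact ⟨a y, (LinearMap.congr_fun (comp_pow_eq_pow_comp h k) y).symm⟩

lemma apply_mem_eventualRange_self (f : End R M) :
    ∀ x ∈ eventualRange f, f x ∈ eventualRange f :=
  apply_mem_eventualRange rfl

lemma restrict_eventualRange_comp_eq_comp_restrict {f : End R M} {g : End R N}
    {a : M →ₗ[R] N} (h : a ∘ₗ f = g ∘ₗ a) :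
    a.restrict (apply_mem_eventualRange h) ∘ₗ f.restrict (apply_mem_eventualRange_self f) =
      g.restrict (apply_mem_eventualRange_self g) ∘ₗ a.restrict (apply_mem_eventualRange h) := by
  ext x
  exact LinearMap.congr_fun h x

end Semiring

section Field

variable {K V : Type*} [Field K] [AddCommGroup V] [Module K V] [FiniteDimensional K V]

lemma isCompl_maxGenEigenspace_zero_eventualRange (f : End K V) :
    IsCompl (f.maxGenEigenspace 0) (eventualRange f) := by
  have : f.maxGenEigenspace 0 = ⨆ k, LinearMap.ker (f ^ k) := by
    simp [← iSup_genEigenspace_eq, genEigenspace_nat]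
  rw [this]
  exact LinearMap.isCompl_iSup_ker_pow_iInf_range_pow f

lemma bijective_restrict_eventualRange (f : End K V) :
    Bijective (f.restrict (apply_mem_eventualRange_self f)) := by
  have hinj : Function.Injective ⇑(f.restrict (apply_mem_eventualRange_self f)) := by
    rw [← LinearMap.ker_eq_bot, Submodule.eq_bot_iff]
    rintro ⟨x, hx⟩ hfx
    have hker : x ∈ f.maxGenEigenspace 0 := eigenspace_le_maxGenEigenspace <| by
      rw [mem_eigenspace_iff, zero_smul]
      exact congr_arg Subtype.val hfx
    simpa using (isCompl_maxGenEigenspace_zero_eventualRange f).disjoint.le_bot ⟨hker, hx⟩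
  exact ⟨hinj, LinearMap.injective_iff_surjective.mp hinj⟩

lemma isNilpotent_restrict_maxGenEigenspace_zero (f : End K V)
    (h : MapsTo f (f.maxGenEigenspace 0) (f.maxGenEigenspace 0)) :
    IsNilpotent (f.restrict h) := by
  simpa using f.isNilpotent_restrict_maxGenEigenspace_sub_algebraMap 0

lemma trace_pow_eq_trace_pow_restrict_eventualRange (f : End K V) {n : ℕ} (hn : n ≠ 0) :
    LinearMap.trace K V (f ^ n) =
      LinearMap.trace K (eventualRange f) (f.restrict (apply_mem_eventualRange_self f) ^ n) := by
  have hK := mapsTo_maxGenEigenspace_of_comm (Commute.refl f) 0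
  have hnil := (isNilpotent_restrict_maxGenEigenspace_zero f hK).pow_of_pos hn
  have hR := apply_mem_eventualRange_self f
  rw [pow_restrict n hK] at hnil
  rw [pow_restrict n hR, LinearMap.trace_eq_trace_restrict_add_trace_restrict
    (isCompl_maxGenEigenspace_zero_eventualRange f) (pow_apply_mem_of_forall_mem n hK)
    (pow_apply_mem_of_forall_mem n hR), (LinearMap.isNilpotent_trace_of_isNilpotent hnil).eq_zero,
    zero_add]

lemma bijective_restrict_eventualRange_of_comp_eq_pow {W : Type*} [AddCommGroup W] [Module K W]
    [FiniteDimensional K W] {u : End K V} {v : End K W} {a : V →ₗ[K] W} {b : W →ₗ[K] V} {m : ℕ}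
    (hau : a ∘ₗ u = v ∘ₗ a) (hbv : b ∘ₗ v = u ∘ₗ b) (hba : b ∘ₗ a = u ^ m)
    (hab : a ∘ₗ b = v ^ m) : Bijective (a.restrict (apply_mem_eventualRange hau)) := by
  set a' := a.restrict (apply_mem_eventualRange hau)
  set b' := b.restrict (apply_mem_eventualRange hbv)
  have hba' : b' ∘ₗ a' = u.restrict (apply_mem_eventualRange_self u) ^ m := by
    rw [pow_restrict]
    ext x
    exact LinearMap.congr_fun hba x
  have hab' : a' ∘ₗ b' = v.restrict (apply_mem_eventualRange_self v) ^ m := by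
    rw [pow_restrict]
    ext x
    exact LinearMap.congr_fun hab x
  refine ⟨Function.Injective.of_comp (f := b') ?_, Function.Surjective.of_comp (g := b') ?_⟩
  · rw [← LinearMap.coe_comp, hba', coe_pow]
    exact ((bijective_restrict_eventualRange u).iterate m).injective
  · rw [← LinearMap.coe_comp, hab', coe_pow]
    exact ((bijective_restrict_eventualRange v).iterate m).surjective

end Field

end Module.End

open Module.End

/-- Shift equivalent linear endomorphisms of finite-dimensional `ℚ`-vector spaces have
equal traces of all their iterates (they are spectrum equivalent). -/
theorem trace_pow_eq_of_linShiftEquiv {G H : Type*}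
    [AddCommGroup G] [Module ℚ G] [FiniteDimensional ℚ G]
    [AddCommGroup H] [Module ℚ H] [FiniteDimensional ℚ H]
    (u : G →ₗ[ℚ] G) (v : H →ₗ[ℚ] H) (h : LinShiftEquiv u v) :
    ∀ n : ℕ, 1 ≤ n → LinearMap.trace ℚ G (u ^ n) = LinearMap.trace ℚ H (v ^ n) := by
  obtain ⟨a, b, m, hau, hbv, hba, hab⟩ := h
  intro n hn
  rw [trace_pow_eq_trace_pow_restrict_eventualRange u (by omega),
    trace_pow_eq_trace_pow_restrict_eventualRange v (by omega)]
  exact LinearMap.trace_eq_of_comp_eq_comp_of_bijective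
    (bijective_restrict_eventualRange_of_comp_eq_pow hau hbv hba hab)
    (comp_pow_eq_pow_comp (restrict_eventualRange_comp_eq_comp_restrict hau) n)
end

section
/- For every map φ : J → J of a finite set J, the sequence {#Fix(φ^n)}_{n≥1} satisfies Dold's congruences: for every integer n ≥ 1, the sum ∑_{k|n} μ(n/k)·#Fix(φ^k), taken over the positive divisors k of n, is divisible by n, where μ is the Möbius function. -/
/-!
A fixed point of `φᵏ` is a point whose exact period divides `k`, so `#Fix(φᵏ)` is the sum over
`d ∣ k` of the numbers of points of exact period `d`. Möbius inversion turns the sum in Dold's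
congruence into the number of points of exact period `n`, and these split into `φ`-orbits of
exactly `n` points each: `ZMod n` acts freely on them through the iterates of `φ`.
-/

open ArithmeticFunction

namespace Function

variable {α : Type*}

instance minimalPeriodAddAction (f : α → α) (n : ℕ) [NeZero n] :
    AddAction (ZMod n) {x : α // minimalPeriod f x = n} where
  vadd j x := ⟨f^[j.val] x, by
    have hx : x.1 ∈ periodicPts f := by
      rw [← minimalPeriod_pos_iff_mem_periodicPts, x.2]
      exact NeZero.pos n
    rw [minimalPeriod_apply_iterate hx, x.2]⟩
  zero_vadd x := Subtype.ext <| by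
    change f^[(0 : ZMod n).val] x = x
    rw [ZMod.val_zero, iterate_zero_apply]
  add_vadd a b x := Subtype.ext <| by
    have hx : IsPeriodicPt f n x := by simpa only [x.2] using isPeriodicPt_minimalPeriod f x
    change f^[(a + b).val] x = f^[a.val] (f^[b.val] x)
    rw [← iterate_add_apply, ZMod.val_add, hx.iterate_mod_apply]

theorem stabilizer_minimalPeriodAddAction_eq_bot (f : α → α) (n : ℕ) [NeZero n]
    (x : {x : α // minimalPeriod f x = n}) : AddAction.stabilizer (ZMod n) x = ⊥ := by
  refine (AddSubgroup.eq_bot_iff_forall _).mpr fun j hj => ?_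
  have hfix : IsPeriodicPt f j.val x := congrArg Subtype.val hj
  have hdvd : n ∣ j.val := by simpa only [x.2] using hfix.minimalPeriod_dvd
  exact (ZMod.val_eq_zero j).mp (Nat.eq_zero_of_dvd_of_lt hdvd (ZMod.val_lt j))

theorem dvd_card_minimalPeriod_eq [Finite α] (f : α → α) (n : ℕ) [NeZero n] :
    n ∣ Nat.card {x : α // minimalPeriod f x = n} := by
  rw [Nat.card_congr
      (AddAction.selfEquivOrbitsQuotientProd (stabilizer_minimalPeriodAddAction_eq_bot f n)),
    Nat.card_prod, Nat.card_zmod]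
  exact dvd_mul_left n _

theorem card_iterate_fixed_eq_sum_card_minimalPeriod_eq [Finite α] (f : α → α) {k : ℕ}
    (hk : k ≠ 0) :
    Nat.card {x : α // f^[k] x = x} =
      ∑ d ∈ k.divisors, Nat.card {x : α // minimalPeriod f x = d} := by
  classical
  have := Fintype.ofFinite α
  simp only [Nat.card_eq_fintype_card, Fintype.card_subtype]
  rw [Finset.card_eq_sum_card_fiberwise (f := minimalPeriod f) (t := k.divisors)]
  · refine Finset.sum_congr rfl fun d hd => congrArg Finset.card ?_
    ext x
    simp only [Finset.mem_filter, Finset.mem_univ, true_and, and_iff_right_iff_imp]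
    rintro rfl
    exact isPeriodicPt_iff_minimalPeriod_dvd.mpr (Nat.dvd_of_mem_divisors hd)
  · intro x hx
    simp only [Finset.coe_filter, Finset.mem_univ, true_and, Set.mem_ofPred_eq] at hx
    exact Nat.mem_divisors.mpr ⟨IsPeriodicPt.minimalPeriod_dvd hx, hk⟩

theorem sum_moebius_mul_card_iterate_fixed_eq_card_minimalPeriod_eq [Finite α] (f : α → α)
    {n : ℕ} (hn : n ≠ 0) :
    ∑ k ∈ n.divisors, moebius (n / k) * (Nat.card {x : α // f^[k] x = x} : ℤ) =
      Nat.card {x : α // minimalPeriod f x = n} := by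
  have hinv := (sum_eq_iff_sum_smul_moebius_eq (R := ℤ)
    (f := fun d => (Nat.card {x : α // minimalPeriod f x = d} : ℤ))
    (g := fun k => (Nat.card {x : α // f^[k] x = x} : ℤ))).mp
    (fun k hk => by exact_mod_cast (card_iterate_fixed_eq_sum_card_minimalPeriod_eq f hk.ne').symm)
    n (Nat.pos_of_ne_zero hn)
  rw [Nat.sum_divisorsAntidiagonal' fun i k => moebius i • (Nat.card {x // f^[k] x = x} : ℤ)]
    at hinv
  simpa only [smul_eq_mul] using hinv

end Function

/-- For every self-map `φ` of a finite set, the sequence of numbers of fixed points of the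
iterates of `φ` satisfies Dold's congruences: for every `n ≥ 1`,
`∑_{k ∣ n} μ(n/k)·#Fix(φᵏ) ≡ 0 (mod n)`, where `μ` is the Möbius function. -/
theorem fixedPoints_iterate_dold_congruences {J : Type*} [Finite J] (φ : J → J) :
    ∀ n : ℕ, 1 ≤ n →
      (n : ℤ) ∣ ∑ k ∈ n.divisors,
        ArithmeticFunction.moebius (n / k) * (Nat.card {x : J // φ^[k] x = x} : ℤ) := by
  intro n hn
  have : NeZero n := ⟨by omega⟩
  rw [Function.sum_moebius_mul_card_iterate_fixed_eq_card_minimalPeriod_eq φ (NeZero.ne n)]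
  exact_mod_cast Function.dvd_card_minimalPeriod_eq φ n
end

section
/- If φ : J → J and ψ : J' → J' are shift equivalent maps of finite sets, then #Fix(φ^n) = #Fix(ψ^n) for every integer n ≥ 1. -/
namespace Function

variable {α β : Type*} {φ : α → α} {ψ : β → β} {a : α → β} {b : β → α} {m n : ℕ}

theorem injOn_ptsOfPeriod_of_comp_eq_iterate (hba : b ∘ a = φ^[m]) (hn : 0 < n) :
    Set.InjOn a (ptsOfPeriod φ n) :=
  Set.InjOn.of_comp (g := b) (hba ▸ ((bijOn_ptsOfPeriod φ hn).iterate m).injOn)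

theorem Semiconj.card_ptsOfPeriod_le [Finite β] (ha : Semiconj a φ ψ) (hba : b ∘ a = φ^[m])
    (hn : 0 < n) : Nat.card (ptsOfPeriod φ n) ≤ Nat.card (ptsOfPeriod ψ n) :=
  Set.ncard_le_ncard_of_injOn a (ha.mapsTo_ptsOfPeriod n)
    (injOn_ptsOfPeriod_of_comp_eq_iterate hba hn)

end Function

/-- Shift equivalent self-maps of finite sets have the same number of fixed points for
every iterate. -/
theorem card_fixedPoints_eq_of_funShiftEquiv {J J' : Type*} [Finite J] [Finite J']
    (φ : J → J) (ψ : J' → J') (h : FunShiftEquiv φ ψ) :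
    ∀ n : ℕ, 1 ≤ n →
      Nat.card {x : J // φ^[n] x = x} = Nat.card {x : J' // ψ^[n] x = x} := by
  obtain ⟨a, b, m, ha, hb, hba, hab⟩ := h
  intro n hn
  exact le_antisymm
    ((Function.semiconj_iff_comp_eq.2 ha).card_ptsOfPeriod_le hba hn)
    ((Function.semiconj_iff_comp_eq.2 hb).card_ptsOfPeriod_le hab hn)
end

section
/- Let (H_n)_{n≥0} be a sequence of finite-dimensional ℚ-vector spaces with linear maps p_n : H_{n+1} → H_n, and for m ≥ n let p_{m,n} = p_n ∘ p_{n+1} ∘ … ∘ p_{m−1} : H_m → H_n (with p_{n,n} the identity). If the inverse limit {x ∈ ∏_{n} H_n : p_n(x_{n+1}) = x_n for all n} contains only the zero element, then for every n there exists m ≥ n such that p_{m,n} is the zero map. -/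
/-- The composite map `p_{n+k,n} = p n ∘ p (n+1) ∘ … ∘ p (n+k-1) : H (n+k) → H n` of an
inverse sequence of linear maps (with `p_{n,n}` the identity). -/
def transMap {H : ℕ → Type*} [∀ n, AddCommGroup (H n)] [∀ n, Module ℚ (H n)]
    (p : ∀ n, H (n + 1) →ₗ[ℚ] H n) : ∀ (n k : ℕ), H (n + k) →ₗ[ℚ] H n
  | _, 0 => LinearMap.id
  | n, k + 1 => (transMap p n k).comp (p (n + k))

/-!
Mittag-Leffler argument. For fixed `n` the images of `p_{n+k,n}` form a decreasing chain of
subspaces of the finite-dimensional space `H n`, so they stabilize at some stable image `S n`.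
Since `p_{n+k+1,n} = p n ∘ p_{n+k+1,n+1}`, the map `p n` carries `S (n+1)` onto `S n`; hence every
vector of `S n` lies on a compatible sequence, which is zero by hypothesis. So `S n = 0`, i.e.
`p_{m,n} = 0` for `m` large.
-/

theorem exists_compatible_seq_of_forall_exists_lift {X : ℕ → Type*} (f : ∀ n, X (n + 1) → X n)
    (S : ∀ n, Set (X n)) (hS : ∀ n, ∀ v ∈ S n, ∃ w ∈ S (n + 1), f n w = v) (n : ℕ) {v : X n}
    (hv : v ∈ S n) : ∃ x : ∀ m, X m, (∀ m, f m (x (m + 1)) = x m) ∧ x n = v := by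
  induction n generalizing X with
  | zero =>
    choose lift hlift_mem hlift using hS
    let y : ∀ m, S m := fun m => Nat.rec ⟨v, hv⟩ (fun m y => ⟨lift m y y.2, hlift_mem m y y.2⟩) m
    refine ⟨fun m => (y m).1, fun m => ?_, rfl⟩
    exact hlift m (y m).1 (y m).2
  | succ n ih =>
    obtain ⟨x, hx, rfl⟩ := ih (fun m => f (m + 1)) (fun m => S (m + 1)) (fun m => hS (m + 1)) hv
    refine ⟨fun | 0 => f 0 (x 0) | m + 1 => x m, ?_, rfl⟩
    rintro (_ | m)
    · rfl
    · exact hx m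

section

variable {H : ℕ → Type*} [∀ n, AddCommGroup (H n)] [∀ n, Module ℚ (H n)]
  (p : ∀ n, H (n + 1) →ₗ[ℚ] H n)

theorem transMap_succ_comp_cast (n k : ℕ) :
    (transMap p n (k + 1)).comp
        (LinearEquiv.cast (M := H) (Nat.add_right_comm n 1 k)).toLinearMap =
      (p n).comp (transMap p (n + 1) k) := by
  induction k generalizing n with
  | zero => rfl
  | succ k ih =>
    have hcast : ∀ {a b : ℕ} (h : a = b),
        (p b).comp (LinearEquiv.cast (M := H) (congrArg (· + 1) h)).toLinearMap =
          (LinearEquiv.cast (M := H) h).toLinearMap.comp (p a) := by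
      rintro a _ rfl; rfl
    ext x
    exact (congrArg (transMap p n (k + 1))
      (LinearMap.congr_fun (hcast (Nat.add_right_comm n 1 k)) x)).trans
        (LinearMap.congr_fun (ih n) _)

theorem range_transMap_succ (n k : ℕ) :
    LinearMap.range (transMap p n (k + 1)) =
      (LinearMap.range (transMap p (n + 1) k)).map (p n) := by
  rw [← LinearMap.range_comp, ← transMap_succ_comp_cast,
    LinearMap.range_comp_of_range_eq_top _ (LinearEquiv.range _)]

theorem range_transMap_antitone (n : ℕ) :
    Antitone fun k => LinearMap.range (transMap p n k) :=
  antitone_nat_of_succ_le fun _ => LinearMap.range_comp_le_range _ _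

theorem range_transMap_stabilizes [∀ n, FiniteDimensional ℚ (H n)] (n : ℕ) :
    ∃ k₀, ∀ k, k₀ ≤ k → LinearMap.range (transMap p n k) = LinearMap.range (transMap p n k₀) := by
  obtain ⟨k₀, hk₀⟩ := IsArtinian.monotone_stabilizes ⟨_, range_transMap_antitone p n⟩
  exact ⟨k₀, fun k hk => (hk₀ k hk).symm⟩

theorem exists_lift_of_range_transMap_stable {K : ℕ → ℕ}
    (hK : ∀ n k, K n ≤ k → LinearMap.range (transMap p n k) = LinearMap.range (transMap p n (K n)))
    (n : ℕ) {v : H n} (hv : v ∈ LinearMap.range (transMap p n (K n))) :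
    ∃ w ∈ LinearMap.range (transMap p (n + 1) (K (n + 1))), p n w = v := by
  set k := max (K n) (K (n + 1))
  rw [← hK n (k + 1) (by omega), range_transMap_succ, hK (n + 1) k (le_max_right _ _)] at hv
  exact hv

end

/-- If an inverse sequence of finite-dimensional `ℚ`-vector spaces has trivial inverse limit
(the only compatible sequence is zero), then for every `n` some composite map
`p_{m,n} : H m → H n` with `m ≥ n` is zero. -/
theorem exists_transMap_eq_zero_of_limit_trivial {H : ℕ → Type*}
    [∀ n, AddCommGroup (H n)] [∀ n, Module ℚ (H n)] [∀ n, FiniteDimensional ℚ (H n)]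
    (p : ∀ n, H (n + 1) →ₗ[ℚ] H n)
    (hlim : ∀ x : (∀ n, H n), (∀ n, p n (x (n + 1)) = x n) → ∀ n, x n = 0) :
    ∀ n : ℕ, ∃ k : ℕ, transMap p n k = 0 := by
  choose K hK using range_transMap_stabilizes p
  intro n
  refine ⟨K n, LinearMap.range_eq_bot.mp (eq_bot_iff.mpr fun v hv => ?_)⟩
  obtain ⟨x, hx, rfl⟩ := exists_compatible_seq_of_forall_exists_lift (fun m => p m)
    (fun m => LinearMap.range (transMap p m (K m)))
    (fun m _ => exists_lift_of_range_transMap_stable p hK m) n hv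
  exact hlim x hx n
end

section
/- Let (b_k)_{k≥1} and (c_k)_{k≥1} be sequences of non-negative integers, and define the integer sequence (a_k)_{k≥1} by: a_1 = 2 − b_1 − c_1; a_2 = −1 − b_2 + c_2 + c_1; a_k = −b_k − c_k for odd k > 1; a_k = −b_k + c_k for even k > 2 with k/2 even; a_k = −b_k + c_k + c_{k/2} for even k > 2 with k/2 odd. Then for every integer n ≥ 1: if n is odd, ∑_{k|n} k·a_k = 2 − ∑_{k|n} k·(b_k + c_k), and if n is even, ∑_{k|n} k·a_k = −∑_{k|n} k·(b_k − c_k), where all sums are taken over the positive divisors k of n. -/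
/-!
For odd `n` every divisor `k` is odd, and then `k a_k + k (b_k + c_k)` is `2` for `k = 1` and `0`
otherwise. For even `n = 2m`, the divisors of `2m` are the odd divisors of `m` together with the
doubles of all divisors of `m`, and the defect `e_k = k a_k + k (b_k - c_k)` satisfies
`e_{2d} = -e_d` for odd `d` and `e_{2d} = 0` for even `d`, so the defects cancel in pairs.
-/

open Finset

theorem Nat.sum_divisors_two_mul {M : Type*} [AddCommMonoid M] (f : ℕ → M) (m : ℕ) :
    ∑ k ∈ (2 * m).divisors, f k =
      ∑ k ∈ m.divisors with Odd k, f k + ∑ d ∈ m.divisors, f (2 * d) := by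
  rw [← sum_filter_add_sum_filter_not _ Odd]
  congr 1
  · refine sum_congr (Finset.ext fun k => ?_) fun _ _ => rfl
    simp only [mem_filter, Nat.mem_divisors, and_congr_left_iff]
    intro hk
    rw [hk.coprime_two_right.dvd_mul_left]
    simp
  · have h_even : {k ∈ (2 * m).divisors | ¬Odd k} = m.divisors.image (2 * ·) := by
      ext k
      simp only [mem_filter, Nat.mem_divisors, Nat.not_odd_iff_even, mem_image]
      constructor
      · rintro ⟨⟨hk, hm⟩, hk2⟩
        obtain ⟨j, rfl⟩ := hk2.two_dvd
        exact ⟨j, ⟨Nat.dvd_of_mul_dvd_mul_left two_pos hk, by simpa using hm⟩, rfl⟩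
      · rintro ⟨j, ⟨hj, hm⟩, rfl⟩
        exact ⟨⟨mul_dvd_mul_left 2 hj, by simpa⟩, even_two_mul j⟩
    rw [h_even, sum_image fun _ _ _ _ => Nat.eq_of_mul_eq_mul_left two_pos]

section

variable {a : ℕ → ℤ} {b c : ℕ → ℕ}

theorem mul_add_mul_add_eq_of_odd (h1 : a 1 = 2 - (b 1 : ℤ) - (c 1 : ℤ))
    (hodd : ∀ k : ℕ, Odd k → 1 < k → a k = -(b k : ℤ) - (c k : ℤ)) {k : ℕ} (hk : Odd k) :
    k * a k + k * (b k + c k) = if k = 1 then 2 else 0 := by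
  obtain rfl | hk1 := eq_or_ne k 1
  · simp [h1]
  · rw [hodd k hk (by have := hk.pos; omega), if_neg hk1]
    ring

variable (a b c) in
def defect (k : ℕ) : ℤ := k * a k + k * (b k - c k)

theorem defect_two_mul (h1 : a 1 = 2 - (b 1 : ℤ) - (c 1 : ℤ))
    (h2 : a 2 = -1 - (b 2 : ℤ) + (c 2 : ℤ) + (c 1 : ℤ))
    (hodd : ∀ k : ℕ, Odd k → 1 < k → a k = -(b k : ℤ) - (c k : ℤ))
    (heven : ∀ k : ℕ, Even k → 2 < k → Even (k / 2) → a k = -(b k : ℤ) + (c k : ℤ))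
    (heven' : ∀ k : ℕ, Even k → 2 < k → Odd (k / 2) →
      a k = -(b k : ℤ) + (c k : ℤ) + (c (k / 2) : ℤ)) {d : ℕ} (hd : 0 < d) :
    defect a b c (2 * d) = if Odd d then -defect a b c d else 0 := by
  have half : 2 * d / 2 = d := by omega
  unfold defect
  obtain rfl | hd1 := eq_or_ne d 1
  · simp only [mul_one, Nat.cast_ofNat, Nat.cast_one, one_mul, odd_one, if_true, h1, h2]
    ring
  have hlt : 2 < 2 * d := by omega
  rcases Nat.even_or_odd d with hde | hdo
  · rw [heven _ (even_two_mul d) hlt (by rwa [half]), if_neg (Nat.not_odd_iff_even.mpr hde)]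
    push_cast
    ring
  · rw [heven' _ (even_two_mul d) hlt (by rwa [half]), half, if_pos hdo, hodd d hdo (by omega)]
    push_cast
    ring

end

/-- If `(b_k)` and `(c_k)` are sequences of non-negative integers and the integer sequence
`(a_k)` is defined by `a_1 = 2 - b_1 - c_1`, `a_2 = -1 - b_2 + c_2 + c_1`,
`a_k = -b_k - c_k` for odd `k > 1`, `a_k = -b_k + c_k` for even `k > 2` with `k/2` even, and
`a_k = -b_k + c_k + c_{k/2}` for even `k > 2` with `k/2` odd, then for every `n ≥ 1`:
if `n` is odd then `∑_{k ∣ n} k·a_k = 2 - ∑_{k ∣ n} k·(b_k + c_k)`, and if `n` is even then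
`∑_{k ∣ n} k·a_k = -∑_{k ∣ n} k·(b_k - c_k)`. -/
theorem sum_divisors_a_eq (b c : ℕ → ℕ) (a : ℕ → ℤ)
    (h1 : a 1 = 2 - (b 1 : ℤ) - (c 1 : ℤ))
    (h2 : a 2 = -1 - (b 2 : ℤ) + (c 2 : ℤ) + (c 1 : ℤ))
    (hodd : ∀ k : ℕ, Odd k → 1 < k → a k = -(b k : ℤ) - (c k : ℤ))
    (heven : ∀ k : ℕ, Even k → 2 < k → Even (k / 2) → a k = -(b k : ℤ) + (c k : ℤ))
    (heven' : ∀ k : ℕ, Even k → 2 < k → Odd (k / 2) →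
      a k = -(b k : ℤ) + (c k : ℤ) + (c (k / 2) : ℤ)) :
    ∀ n : ℕ, 1 ≤ n →
      (Odd n → ∑ k ∈ n.divisors, (k : ℤ) * a k =
        2 - ∑ k ∈ n.divisors, (k : ℤ) * ((b k : ℤ) + (c k : ℤ))) ∧
      (Even n → ∑ k ∈ n.divisors, (k : ℤ) * a k =
        -∑ k ∈ n.divisors, (k : ℤ) * ((b k : ℤ) - (c k : ℤ))) := by
  intro n hn
  constructor
  · intro hn_odd
    have hsum : ∑ k ∈ n.divisors, ((k : ℤ) * a k + k * (b k + c k)) = 2 := by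
      rw [sum_congr rfl fun k hk => mul_add_mul_add_eq_of_odd h1 hodd
          (hn_odd.of_dvd_nat (Nat.dvd_of_mem_divisors hk)),
        sum_ite_eq', if_pos (Nat.one_mem_divisors.mpr (by omega))]
    rw [sum_add_distrib] at hsum
    linarith
  · intro hn_even
    obtain ⟨m, rfl⟩ := hn_even.two_dvd
    have hsum : ∑ k ∈ (2 * m).divisors, defect a b c k = 0 := by
      rw [Nat.sum_divisors_two_mul, sum_congr rfl fun d hd =>
          defect_two_mul h1 h2 hodd heven heven' (Nat.pos_of_mem_divisors hd),
        ← sum_filter, ← sum_add_distrib]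
      exact sum_eq_zero fun _ _ => add_neg_cancel _
    simp only [defect, sum_add_distrib] at hsum
    linarith
end
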